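/- arXiv:0811.4139 — 3 statements merged into one kernel-verified Lean document; each statement's English description precedes it below -/
import Mathlib

section
/- Let q be a prime power, r a power of the same prime with F_r ⊆ F_q, and d ≥ 1 an odd integer such that every prime factor of d divides r−1 and gcd(d, (q−1)/(r−1)) = 1. If γ is a primitive element (generator of the multiplicative group) of F_r, then the binomial T^d − γ ∈ F_r[T] is irreducible over F_q. -/
open Polynomial

/-!
For odd `d`, `T^d - γ` is irreducible as soon as `γ` is not a `p`-th power in `F_q` for any prime
`p ∣ d`. A `p`-th root `b` of `γ` would have order `p (r - 1)`, because `p` divides the order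
`r - 1` of `γ`; as this order divides `q - 1`, the prime `p` would divide both `d` and
`(q - 1)/(r - 1)`.
-/

theorem orderOf_eq_mul_orderOf_pow_of_dvd {M : Type*} [Monoid M] {x : M} {p : ℕ} (hp : p.Prime)
    (h : p ∣ orderOf (x ^ p)) : orderOf x = p * orderOf (x ^ p) := by
  have hpx : p ∣ orderOf x := by
    by_contra hnp
    rw [(Nat.Coprime.orderOf_pow ((hp.coprime_iff_not_dvd).mpr hnp).symm)] at h
    exact hnp h
  rw [orderOf_pow_of_dvd hp.ne_zero hpx, Nat.mul_div_cancel' hpx]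

theorem orderOf_algebraMap_of_forall_mem_zpowers (K L : Type*) [Field K] [Fintype K] [Field L]
    [Algebra K L] {γ : Kˣ} (hγ : ∀ x : Kˣ, x ∈ Subgroup.zpowers γ) :
    orderOf (algebraMap K L γ) = Fintype.card K - 1 := by
  calc orderOf (algebraMap K L γ) = orderOf (γ : K) :=
        orderOf_injective (algebraMap K L).toMonoidHom (algebraMap K L).injective _
    _ = Fintype.card K - 1 := by
      rw [orderOf_units, orderOf_eq_card_of_forall_mem_zpowers hγ, Nat.card_units,
        Nat.card_eq_fintype_card]

theorem dvd_card_sub_one_div_of_pow_eq_algebraMap (K L : Type*) [Field K] [Fintype K] [Field L]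
    [Fintype L] [Algebra K L] {γ : Kˣ} (hγ : ∀ x : Kˣ, x ∈ Subgroup.zpowers γ) {p : ℕ}
    (hp : p.Prime) (hpK : p ∣ Fintype.card K - 1) {b : L} (hb : b ^ p = algebraMap K L γ) :
    p ∣ (Fintype.card L - 1) / (Fintype.card K - 1) := by
  have hordγ := orderOf_algebraMap_of_forall_mem_zpowers K L hγ
  have hb0 : b ≠ 0 := by
    rintro rfl
    rw [zero_pow hp.ne_zero, eq_comm, map_eq_zero] at hb
    exact γ.ne_zero hb
  have hordb : orderOf b = p * (Fintype.card K - 1) := by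
    rw [orderOf_eq_mul_orderOf_pow_of_dvd hp (by rwa [hb, hordγ]), hb, hordγ]
  refine Nat.dvd_div_of_mul_dvd ?_
  rw [mul_comm, ← hordb]
  exact orderOf_dvd_of_pow_eq_one (FiniteField.pow_card_sub_one_eq_one b hb0)

theorem stmt0_general (Fr Fq : Type) [Field Fr] [Fintype Fr] [Field Fq] [Fintype Fq]
    [Algebra Fr Fq] (d : ℕ) (hodd : Odd d)
    (hfac : ∀ p : ℕ, p.Prime → p ∣ d → p ∣ (Fintype.card Fr - 1))
    (hgcd : Nat.gcd d ((Fintype.card Fq - 1) / (Fintype.card Fr - 1)) = 1)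
    (γ : Frˣ) (hγ : ∀ x : Frˣ, x ∈ Subgroup.zpowers γ) :
    Irreducible ((X : Polynomial Fq) ^ d - C (algebraMap Fr Fq γ)) := by
  refine X_pow_sub_C_irreducible_of_odd hodd fun p hp hpd b hb => hp.not_dvd_one ?_
  rw [← hgcd]
  exact Nat.dvd_gcd hpd
    (dvd_card_sub_one_div_of_pow_eq_algebraMap Fr Fq hγ hp (hfac p hp hpd) hb)

/-- Binomial irreducibility criterion: if every prime factor of the odd integer `d`
divides `r - 1` and `gcd(d, (q-1)/(r-1)) = 1`, then `T^d - γ` is irreducible over `F_q`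
for `γ` a primitive element of `F_r ⊆ F_q`. -/
theorem stmt0 (Fr Fq : Type) [Field Fr] [Fintype Fr] [Field Fq] [Fintype Fq]
    [Algebra Fr Fq] (d : ℕ) (hd1 : 1 ≤ d) (hodd : Odd d)
    (hfac : ∀ p : ℕ, p.Prime → p ∣ d → p ∣ (Fintype.card Fr - 1))
    (hgcd : Nat.gcd d ((Fintype.card Fq - 1) / (Fintype.card Fr - 1)) = 1)
    (γ : Frˣ) (hγ : ∀ x : Frˣ, x ∈ Subgroup.zpowers γ) :
    Irreducible ((X : Polynomial Fq) ^ d - C (algebraMap Fr Fq γ)) :=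
  stmt0_general Fr Fq d hodd hfac hgcd γ hγ
end

section
/- Let F_q be a finite field with q elements and γ a primitive element of F_q. For every polynomial f ∈ F_q[X], the congruence f(γ·X) ≡ f(X)^q holds modulo the polynomial X^{q−1} − γ in F_q[X]. -/
open Polynomial

/-- For a primitive element `γ` of `F_q` and every `f ∈ F_q[X]`,
`f(γX) ≡ f(X)^q (mod X^{q-1} - γ)`. -/
theorem stmt2 (Fq : Type) [Field Fq] [Fintype Fq]
    (γ : Fqˣ) (hγ : ∀ x : Fqˣ, x ∈ Subgroup.zpowers γ)
    (f : Polynomial Fq) :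
    (X ^ (Fintype.card Fq - 1) - C (γ : Fq)) ∣
      (f.comp (C (γ : Fq) * X) - f ^ (Fintype.card Fq)) := by
  have hq : (Fintype.card Fq - 1) + 1 = Fintype.card Fq :=
    Nat.succ_pred_eq_of_pos Fintype.card_pos
  rw [← FiniteField.expand_card, expand_eq_comp_X_pow]
  have h1 : (X ^ (Fintype.card Fq - 1) - C (γ : Fq) : Fq[X]) ∣
      (C (γ : Fq) * X - X ^ Fintype.card Fq) := by
    refine ⟨-X, ?_⟩
    have hx : (X : Fq[X]) ^ Fintype.card Fq = X ^ (Fintype.card Fq - 1) * X := by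
      rw [← pow_succ, hq]
    rw [hx]; ring
  refine h1.trans ?_
  simpa only [comp, eval₂_eq_eval_map] using
    sub_dvd_eval_sub (C (γ : Fq) * X) (X ^ Fintype.card Fq) (f.map C)
end

section
/- Let M ∈ F_q[T] be monic irreducible of degree d and let C_M(Z) be its Carlitz polynomial. Then C_M(Z)/Z ∈ F_q[T][Z] is an Eisenstein polynomial in Z at the prime M: all non-leading coefficients are divisible by M, the constant term equals M (hence not divisible by M²), and the leading coefficient is 1. Consequently C_M(Z)/Z is irreducible over F_q(T). -/
open Polynomial

/-!
Only the exponents `q^i` occur in `C_M = ∑_{i ≤ d} [M,i] Z^{q^i}`, with `[M,0] = M` and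
`[M,d] = 1`. Comparing the coefficients of `Z^{q^(j+1)}` in `C_T ∘ C_M = C_M ∘ C_T` gives
`(T^{q^(j+1)} - T) [M,j+1] = [M,j]^q - [M,j]`. An irreducible `M` of degree `d` divides
`T^{q^k} - T` only when `d ∣ k`, so induction on `j` gives `M ∣ [M,j]` for all `j < d`. Thus
`C_M / Z` is monic with constant term `M` and its other lower coefficients divisible by `M`:
it is Eisenstein at `M`, hence irreducible over `F_q[T]` and, by Gauss's lemma, over `F_q(T)`.
-/

theorem FiniteField.add_pow_card_pow (Fq : Type*) [Field Fq] [Fintype Fq] {A : Type*} [CommRing A]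
    [Algebra Fq A] (u v : A) (i : ℕ) :
    (u + v) ^ Fintype.card Fq ^ i = u ^ Fintype.card Fq ^ i + v ^ Fintype.card Fq ^ i := by
  induction i with
  | zero => simp
  | succ i ih =>
    simp only [pow_succ, pow_mul, ih]
    exact map_add (frobeniusAlgHom Fq A) _ _

namespace Polynomial

variable {R : Type*}

theorem induction_X_mul_add_C [Semiring R] {motive : R[X] → Prop} (C_ : ∀ a, motive (C a))
    (X_mul_add_C : ∀ p a, p ≠ 0 → motive p → motive (X * p + C a)) (p : R[X]) :
    motive p := by
  induction hn : p.natDegree using Nat.strong_induction_on generalizing p with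
  | _ n ih =>
    by_cases hp : p.divX = 0
    · rw [divX_eq_zero_iff.mp hp]
      exact C_ _
    · have hpos : 0 < p.natDegree := by
        by_contra! h
        exact hp (by rw [eq_C_of_natDegree_le_zero h, divX_C])
      rw [← X_mul_divX_add p]
      have hlt : p.divX.natDegree < n := by rw [natDegree_divX_eq_natDegree_tsub_one]; omega
      exact X_mul_add_C _ _ hp (ih _ hlt _ rfl)

theorem natDegree_X_mul_add_C [Semiring R] [Nontrivial R] {p : R[X]} (hp : p ≠ 0) (a : R) :
    (X * p + C a).natDegree = p.natDegree + 1 := by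
  rw [natDegree_add_C, natDegree_X_mul hp]

theorem leadingCoeff_X_mul_add_C [Semiring R] [Nontrivial R] {p : R[X]} (hp : p ≠ 0) (a : R) :
    (X * p + C a).leadingCoeff = p.leadingCoeff := by
  rw [leadingCoeff, natDegree_X_mul_add_C hp, coeff_add, coeff_X_mul, coeff_C_succ, add_zero,
    leadingCoeff]

theorem Monic.divX [Semiring R] {p : R[X]} (hp : p.Monic) (hdeg : p.natDegree ≠ 0) :
    p.divX.Monic := by
  show p.divX.coeff p.divX.natDegree = 1
  rw [natDegree_divX_eq_natDegree_tsub_one, coeff_divX,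
    Nat.sub_add_cancel (Nat.one_le_iff_ne_zero.mpr hdeg)]
  exact hp

section Frobenius

variable (Fq : Type*) [Field Fq] [Fintype Fq] {A : Type*} [CommRing A] [Algebra Fq A]

theorem pow_card_eq_map_expand (f : A[X]) :
    f ^ Fintype.card Fq =
      (expand A (Fintype.card Fq) f).map (FiniteField.frobeniusAlgHom Fq A) := by
  have : (FiniteField.frobeniusAlgHom Fq A[X] : A[X] →+* A[X]) =
      (mapRingHom (FiniteField.frobeniusAlgHom Fq A : A →+* A)).comp
        (expand A (Fintype.card Fq) : A[X] →+* A[X]) := by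
    apply ringHom_ext
    · intro a
      simp only [RingHom.coe_coe, RingHom.comp_apply, coe_mapRingHom,
        FiniteField.coe_frobeniusAlgHom, expand_C, map_C, C_pow]
    · simp only [RingHom.coe_coe, RingHom.comp_apply, coe_mapRingHom,
        FiniteField.coe_frobeniusAlgHom, expand_X, Polynomial.map_pow, map_X]
  exact RingHom.congr_fun this f

theorem coeff_pow_card_mul (f : A[X]) (k : ℕ) :
    (f ^ Fintype.card Fq).coeff (Fintype.card Fq * k) = f.coeff k ^ Fintype.card Fq := by
  rw [pow_card_eq_map_expand, coeff_map, coeff_expand_mul' Fintype.card_pos]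
  rfl

theorem coeff_pow_card_of_not_dvd (f : A[X]) {k : ℕ} (hk : ¬ Fintype.card Fq ∣ k) :
    (f ^ Fintype.card Fq).coeff k = 0 := by
  rw [pow_card_eq_map_expand, coeff_map, coeff_expand Fintype.card_pos, if_neg hk, map_zero]

end Frobenius

section QPolynomial

variable [CommRing R]

def IsQPolynomial (q n : ℕ) (f : R[X]) : Prop :=
  ∀ k, f.coeff k ≠ 0 → ∃ i ≤ n, q ^ i = k

theorem isQPolynomial_X (q : ℕ) : IsQPolynomial q 0 (X : R[X]) := fun k hk =>
  ⟨0, le_rfl, by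
    rw [pow_zero]
    by_contra h
    exact hk (coeff_X_of_ne_one (Ne.symm h))⟩

namespace IsQPolynomial

variable {q n : ℕ}

section CommRing

variable {f g : R[X]}

theorem coeff_eq_zero (hf : IsQPolynomial q n f) {k : ℕ} (hk : ∀ i ≤ n, q ^ i ≠ k) :
    f.coeff k = 0 := by
  by_contra h
  obtain ⟨i, hi, rfl⟩ := hf k h
  exact hk i hi rfl

theorem coeff_zero (hq : q ≠ 0) (hf : IsQPolynomial q n f) : f.coeff 0 = 0 :=
  hf.coeff_eq_zero fun i _ => pow_ne_zero i hq

theorem coeff_pow_of_lt (hq : 1 < q) (hf : IsQPolynomial q n f) {j : ℕ} (hj : n < j) :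
    f.coeff (q ^ j) = 0 :=
  hf.coeff_eq_zero fun i hi h => by
    have := Nat.pow_right_injective hq h
    omega

theorem natDegree_le (hq : 0 < q) (hf : IsQPolynomial q n f) : f.natDegree ≤ q ^ n :=
  natDegree_le_iff_coeff_eq_zero.mpr fun k hk =>
    hf.coeff_eq_zero fun i hi h => by
      have := Nat.pow_le_pow_right hq hi
      omega

theorem mono (hf : IsQPolynomial q n f) {m : ℕ} (h : n ≤ m) : IsQPolynomial q m f :=
  fun k hk =>
    let ⟨i, hi, hik⟩ := hf k hk
    ⟨i, hi.trans h, hik⟩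

theorem add (hf : IsQPolynomial q n f) (hg : IsQPolynomial q n g) :
    IsQPolynomial q n (f + g) := by
  intro k hk
  rw [coeff_add] at hk
  by_cases hfk : f.coeff k = 0
  · rw [hfk, zero_add] at hk
    exact hg k hk
  · exact hf k hfk

theorem C_mul (hf : IsQPolynomial q n f) (a : R) : IsQPolynomial q n (C a * f) :=
  fun k hk => hf k (right_ne_zero_of_mul (by rwa [coeff_C_mul] at hk))

theorem eq_sum (hq : 1 < q) (hf : IsQPolynomial q n f) :
    f = ∑ i ∈ Finset.range (n + 1), C (f.coeff (q ^ i)) * X ^ q ^ i := by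
  ext k
  simp only [finsetSum_coeff, coeff_C_mul_X_pow]
  by_cases hk : ∃ i ≤ n, q ^ i = k
  · obtain ⟨i, hi, rfl⟩ := hk
    rw [Finset.sum_eq_single_of_mem i (Finset.mem_range_succ_iff.mpr hi), if_pos rfl]
    intro j _ hji
    exact if_neg fun h => hji (Nat.pow_right_injective hq h).symm
  · push Not at hk
    rw [hf.coeff_eq_zero hk, Finset.sum_eq_zero]
    intro i hi
    exact if_neg fun h => hk i (Finset.mem_range_succ_iff.mp hi) h.symm

end CommRing

section FiniteFieldAlgebra

variable {Fq : Type*} [Field Fq] [Fintype Fq] {A : Type*} [CommRing A] [Algebra Fq A] {f : A[X]}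

theorem pow_card (hf : IsQPolynomial (Fintype.card Fq) n f) :
    IsQPolynomial (Fintype.card Fq) (n + 1) (f ^ Fintype.card Fq) := by
  intro k hk
  obtain ⟨m, rfl⟩ : Fintype.card Fq ∣ k := by
    by_contra h
    exact hk (coeff_pow_card_of_not_dvd Fq f h)
  rw [coeff_pow_card_mul] at hk
  obtain ⟨i, hi, rfl⟩ := hf m (ne_zero_pow Fintype.card_ne_zero hk)
  exact ⟨i + 1, by omega, pow_succ' _ _⟩

theorem comp_add (hf : IsQPolynomial (Fintype.card Fq) n f) (u v : A[X]) :
    f.comp (u + v) = f.comp u + f.comp v := by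
  rw [hf.eq_sum Fintype.one_lt_card]
  simp only [sum_comp, mul_comp, C_comp, X_pow_comp, FiniteField.add_pow_card_pow, mul_add,
    Finset.sum_add_distrib]

theorem card_pow_sub_mul_coeff (hf : IsQPolynomial (Fintype.card Fq) n f) {t : A}
    (hcomm : (X ^ Fintype.card Fq + C t * X).comp f = f.comp (X ^ Fintype.card Fq + C t * X))
    (j : ℕ) :
    (t ^ Fintype.card Fq ^ (j + 1) - t) * f.coeff (Fintype.card Fq ^ (j + 1)) =
      f.coeff (Fintype.card Fq ^ j) ^ Fintype.card Fq - f.coeff (Fintype.card Fq ^ j) := by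
  have h := congrArg (coeff · (Fintype.card Fq ^ (j + 1))) hcomm
  simp only [add_comp, X_pow_comp, mul_comp, C_comp, X_comp, hf.comp_add, coeff_add,
    coeff_C_mul, comp_C_mul_X_coeff, ← expand_eq_comp_X_pow] at h
  rw [pow_succ', coeff_pow_card_mul, coeff_expand_mul' Fintype.card_pos, ← pow_succ'] at h
  linear_combination -h

end FiniteFieldAlgebra

end IsQPolynomial

end QPolynomial

end Polynomial

section Carlitz

variable {Fq : Type*} [Field Fq] [Fintype Fq]

structure IsCarlitz (Carl : Fq[X] → Fq[X][X]) : Prop where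
  map_one : Carl 1 = X
  map_X : Carl X = X ^ Fintype.card Fq + C X * X
  map_add : ∀ M N, Carl (M + N) = Carl M + Carl N
  map_C_mul : ∀ (a : Fq) M, Carl (C a * M) = C (C a) * Carl M
  map_mul : ∀ M N, Carl (M * N) = (Carl M).comp (Carl N)

namespace IsCarlitz

variable {Carl : Fq[X] → Fq[X][X]}

theorem map_C (hC : IsCarlitz Carl) (a : Fq) : Carl (C a) = C (C a) * X := by
  simpa only [mul_one, hC.map_one] using hC.map_C_mul a 1

theorem map_X_mul_add_C (hC : IsCarlitz Carl) (P : Fq[X]) (a : Fq) :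
    Carl (X * P + C a) = Carl P ^ Fintype.card Fq + C X * Carl P + C (C a) * X := by
  rw [hC.map_add, hC.map_mul, hC.map_X, hC.map_C, add_comp, X_pow_comp, mul_comp, C_comp, X_comp]

theorem isQPolynomial (hC : IsCarlitz Carl) (P : Fq[X]) :
    IsQPolynomial (Fintype.card Fq) P.natDegree (Carl P) := by
  induction P using induction_X_mul_add_C with
  | C_ a => rw [hC.map_C, natDegree_C]; exact (isQPolynomial_X _).C_mul _
  | X_mul_add_C P a hP ih =>
    rw [hC.map_X_mul_add_C, natDegree_X_mul_add_C hP]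
    exact (ih.pow_card.add ((ih.C_mul _).mono (Nat.le_succ _))).add
      (((isQPolynomial_X _).C_mul _).mono (Nat.zero_le _))

theorem coeff_one (hC : IsCarlitz Carl) (P : Fq[X]) : (Carl P).coeff 1 = P := by
  induction P using induction_X_mul_add_C with
  | C_ a => rw [hC.map_C, coeff_C_mul_X, if_pos rfl]
  | X_mul_add_C P a _ ih =>
    have h1 : ¬ Fintype.card Fq ∣ 1 := Nat.not_dvd_of_pos_of_lt one_pos Fintype.one_lt_card
    rw [hC.map_X_mul_add_C, coeff_add, coeff_add, coeff_pow_card_of_not_dvd Fq _ h1, coeff_C_mul,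
      coeff_C_mul_X, if_pos rfl, ih, zero_add]

theorem coeff_card_pow_natDegree (hC : IsCarlitz Carl) (P : Fq[X]) :
    (Carl P).coeff (Fintype.card Fq ^ P.natDegree) = C P.leadingCoeff := by
  induction P using induction_X_mul_add_C with
  | C_ a => rw [hC.map_C, natDegree_C, pow_zero, coeff_C_mul_X, if_pos rfl, leadingCoeff_C]
  | X_mul_add_C P a hP ih =>
    have hq : 1 < Fintype.card Fq ^ (P.natDegree + 1) :=
      Nat.one_lt_pow (Nat.succ_ne_zero _) Fintype.one_lt_card
    rw [hC.map_X_mul_add_C, natDegree_X_mul_add_C hP, leadingCoeff_X_mul_add_C hP, coeff_add,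
      coeff_add, coeff_C_mul, coeff_C_mul, coeff_X_of_ne_one hq.ne',
      (hC.isQPolynomial P).coeff_pow_of_lt Fintype.one_lt_card (Nat.lt_succ_self _), pow_succ',
      coeff_pow_card_mul, ih, ← C_pow, FiniteField.pow_card]
    ring

theorem coeff_zero (hC : IsCarlitz Carl) (P : Fq[X]) : (Carl P).coeff 0 = 0 :=
  (hC.isQPolynomial P).coeff_zero Fintype.card_ne_zero

theorem X_mul_divX (hC : IsCarlitz Carl) (P : Fq[X]) : X * (Carl P).divX = Carl P := by
  simpa only [hC.coeff_zero, map_zero, add_zero] using X_mul_divX_add (Carl P)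

theorem natDegree_eq (hC : IsCarlitz Carl) {P : Fq[X]} (hP : P ≠ 0) :
    (Carl P).natDegree = Fintype.card Fq ^ P.natDegree :=
  natDegree_eq_of_le_of_coeff_ne_zero ((hC.isQPolynomial P).natDegree_le Fintype.card_pos)
    (by rw [hC.coeff_card_pow_natDegree]; exact C_ne_zero.mpr (leadingCoeff_ne_zero.mpr hP))

theorem monic (hC : IsCarlitz Carl) {M : Fq[X]} (hM : M.Monic) : (Carl M).Monic := by
  rw [Monic, leadingCoeff, hC.natDegree_eq hM.ne_zero, hC.coeff_card_pow_natDegree,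
    hM.leadingCoeff, C_1]

theorem card_pow_sub_mul_coeff (hC : IsCarlitz Carl) (P : Fq[X]) (j : ℕ) :
    (X ^ Fintype.card Fq ^ (j + 1) - X) * (Carl P).coeff (Fintype.card Fq ^ (j + 1)) =
      (Carl P).coeff (Fintype.card Fq ^ j) ^ Fintype.card Fq -
        (Carl P).coeff (Fintype.card Fq ^ j) :=
  (hC.isQPolynomial P).card_pow_sub_mul_coeff
    (by rw [← hC.map_X, ← hC.map_mul, ← hC.map_mul, mul_comm]) j

theorem dvd_coeff_card_pow (hC : IsCarlitz Carl) {M : Fq[X]} (hM : Irreducible M) {j : ℕ}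
    (hj : j < M.natDegree) : M ∣ (Carl M).coeff (Fintype.card Fq ^ j) := by
  induction j with
  | zero => rw [pow_zero, hC.coeff_one]
  | succ j ih =>
    have hdvd : M ∣ (Carl M).coeff (Fintype.card Fq ^ j) := ih (by omega)
    have hndvd : ¬ M ∣ X ^ Fintype.card Fq ^ (j + 1) - X := fun h => by
      rw [← Nat.card_eq_fintype_card] at h
      have := Nat.le_of_dvd j.succ_pos (hM.natDegree_dvd_of_dvd_X_pow_card_pow_sub_X h)
      omega
    refine (hM.prime.dvd_or_dvd ?_).resolve_left hndvd
    rw [hC.card_pow_sub_mul_coeff]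
    exact dvd_sub (dvd_pow hdvd Fintype.card_ne_zero) hdvd

theorem dvd_coeff (hC : IsCarlitz Carl) {M : Fq[X]} (hM : Irreducible M) {k : ℕ}
    (hk : k < Fintype.card Fq ^ M.natDegree) : M ∣ (Carl M).coeff k := by
  by_cases hqk : ∃ i ≤ M.natDegree, Fintype.card Fq ^ i = k
  · obtain ⟨i, -, rfl⟩ := hqk
    exact hC.dvd_coeff_card_pow hM ((Nat.pow_lt_pow_iff_right Fintype.one_lt_card).mp hk)
  · push Not at hqk
    rw [(hC.isQPolynomial M).coeff_eq_zero hqk]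
    exact dvd_zero M

theorem isEisensteinAt_divX (hC : IsCarlitz Carl) {M : Fq[X]} (hmonic : M.Monic)
    (hirr : Irreducible M) : (Carl M).divX.IsEisensteinAt (Ideal.span {M}) := by
  have hdeg := hC.natDegree_eq hmonic.ne_zero
  refine ⟨?_, fun {n} hn => ?_, ?_⟩
  · rw [((hC.monic hmonic).divX (by rw [hdeg]; positivity)).leadingCoeff,
      Ideal.mem_span_singleton]
    exact hirr.not_dvd_one
  · rw [natDegree_divX_eq_natDegree_tsub_one, hdeg] at hn
    rw [Ideal.mem_span_singleton, coeff_divX]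
    exact hC.dvd_coeff hirr (by omega)
  · rw [coeff_divX, zero_add, hC.coeff_one, pow_two, Ideal.span_singleton_mul_span_singleton,
      Ideal.mem_span_singleton]
    intro h
    exact hirr.not_dvd_one
      ((mul_dvd_mul_iff_left (b := M) (c := 1) hmonic.ne_zero).mp (by rwa [mul_one]))

end IsCarlitz

end Carlitz

/-- For `M` monic irreducible of degree `d`, the polynomial `C_M(Z)/Z` is Eisenstein
at the prime `(M)` (non-leading coefficients divisible by `M`, constant term `M`,
leading coefficient `1`, degree `q^d - 1`), hence irreducible over `F_q(T)`. -/
theorem stmt7 (Fq : Type) [Field Fq] [Fintype Fq]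
    (Carl : Polynomial Fq → Polynomial (Polynomial Fq))
    (h1 : Carl 1 = X)
    (hT : Carl X = X ^ (Fintype.card Fq) + C X * X)
    (hadd : ∀ M N : Polynomial Fq, Carl (M + N) = Carl M + Carl N)
    (hsmul : ∀ (a : Fq) (M : Polynomial Fq), Carl (C a * M) = C (C a) * Carl M)
    (hmul : ∀ M N : Polynomial Fq, Carl (M * N) = (Carl M).comp (Carl N))
    (M : Polynomial Fq) (hmonic : M.Monic) (hirr : Irreducible M)
    (d : ℕ) (hd : M.natDegree = d) :
    ∃ ψ : Polynomial (Polynomial Fq),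
      Carl M = X * ψ ∧
      ψ.Monic ∧
      ψ.natDegree = Fintype.card Fq ^ d - 1 ∧
      ψ.coeff 0 = M ∧
      ψ.IsEisensteinAt (Ideal.span {M}) ∧
      Irreducible (ψ.map (algebraMap (Polynomial Fq) (RatFunc Fq))) := by
  subst hd
  have hC : IsCarlitz Carl := ⟨h1, hT, hadd, hsmul, hmul⟩
  have hdeg : (Carl M).divX.natDegree = Fintype.card Fq ^ M.natDegree - 1 := by
    rw [natDegree_divX_eq_natDegree_tsub_one, hC.natDegree_eq hmonic.ne_zero]
  have hψ : (Carl M).divX.Monic :=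
    (hC.monic hmonic).divX (by rw [hC.natDegree_eq hmonic.ne_zero]; positivity)
  have hEis := hC.isEisensteinAt_divX hmonic hirr
  refine ⟨(Carl M).divX, (hC.X_mul_divX M).symm, hψ, hdeg,
    by rw [coeff_divX, zero_add, hC.coeff_one], hEis, ?_⟩
  have hprime : (Ideal.span {M}).IsPrime :=
    (Ideal.span_singleton_prime hmonic.ne_zero).mpr hirr.prime
  have hpos : 0 < (Carl M).divX.natDegree := by
    rw [hdeg]
    have := Nat.one_lt_pow hirr.natDegree_pos.ne' (Fintype.one_lt_card (α := Fq))
    omega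
  exact hψ.irreducible_iff_irreducible_map_fraction_map.mp
    (hEis.irreducible hprime hψ.isPrimitive hpos)
end
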